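/- arXiv:1807.08983 — 2 statements merged into one kernel-verified Lean document; each statement's English description precedes it below -/
import Mathlib

section
/- Let D, f : ℝ^d × ℝ^d → ℝ^d (D depending only on the second variable, D : ℝ^d → ℝ^d), g : ℝ^d × ℝ^d → ℝ^{d×n}, and suppose there are constants K > 0 and p > 2 such that 2⟨x − a D(y/a), f(x,y)⟩ + (p−1)|g(x,y)|² ≤ K(1 + |x|² + |y|²) for all x, y ∈ ℝ^d and all a ∈ (0,1]. Fix h ≥ 1 and define truncations f_h, g_h by f_h(x,y) = f(x,y) if |x| ∨ |y| ≤ h and f_h(x,y) = ((|x|∨|y|)/h) f((h/(|x|∨|y|))(x,y)) otherwise, similarly for g_h. Then 2⟨x − D(y), f_h(x,y)⟩ + (p−1)|g_h(x,y)|² ≤ 2K(1 + |x|² + |y|²) for all x, y ∈ ℝ^d. -/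
/-!
Writing `a = h / (‖x‖ ⊔ ‖y‖) ∈ (0, 1]` outside the ball of radius `h`, the truncated expression is
`a⁻²` times the Khasminskii expression at `(a • x, a • y)` with parameter `a`, since
`a • D y = a • D (a⁻¹ • (a • y))`. The condition bounds it by `K (a⁻² + ‖x‖² + ‖y‖²)`, and
`a⁻² ≤ (‖x‖ ⊔ ‖y‖)² ≤ ‖x‖² + ‖y‖²` because `h ≥ 1`.
-/

open Real Set

section Rescaling

variable {E F : Type*} [NormedAddCommGroup E] [InnerProductSpace ℝ E]
  [NormedAddCommGroup F] [NormedSpace ℝ F]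

lemma inner_inv_smul_add_norm_inv_smul_sq {a : ℝ} (ha : a ≠ 0) (c : ℝ) (u w : E) (G : F) :
    2 * inner ℝ u (a⁻¹ • w) + c * ‖a⁻¹ • G‖ ^ 2
      = (a ^ 2)⁻¹ * (2 * inner ℝ (a • u) w + c * ‖G‖ ^ 2) := by
  rw [real_inner_smul_right, real_inner_smul_left, norm_smul, norm_inv, norm_eq_abs, mul_pow,
    inv_pow, sq_abs]
  field_simp

lemma khasminskii_rescaled {D : E → E} {f : E → E → E} {g : E → E → F} {K c : ℝ}
    (hKhas : ∀ x y : E, ∀ a : ℝ, a ∈ Ioc (0 : ℝ) 1 →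
      2 * inner ℝ (x - a • D (a⁻¹ • y)) (f x y) + c * ‖g x y‖ ^ 2 ≤ K * (1 + ‖x‖ ^ 2 + ‖y‖ ^ 2))
    {a : ℝ} (ha : a ∈ Ioc (0 : ℝ) 1) (x y : E) :
    2 * inner ℝ (x - D y) (a⁻¹ • f (a • x) (a • y)) + c * ‖a⁻¹ • g (a • x) (a • y)‖ ^ 2
      ≤ K * ((a ^ 2)⁻¹ + ‖x‖ ^ 2 + ‖y‖ ^ 2) := by
  have ha0 : a ≠ 0 := ha.1.ne'
  have hbound := hKhas (a • x) (a • y) a ha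
  rw [inv_smul_smul₀ ha0, ← smul_sub, norm_smul, norm_smul, norm_eq_abs, abs_of_pos ha.1]
    at hbound
  rw [inner_inv_smul_add_norm_inv_smul_sq ha0]
  calc (a ^ 2)⁻¹ * (2 * inner ℝ (a • (x - D y)) (f (a • x) (a • y))
          + c * ‖g (a • x) (a • y)‖ ^ 2)
      ≤ (a ^ 2)⁻¹ * (K * (1 + (a * ‖x‖) ^ 2 + (a * ‖y‖) ^ 2)) := by gcongr
    _ = K * ((a ^ 2)⁻¹ + ‖x‖ ^ 2 + ‖y‖ ^ 2) := by field_simp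

end Rescaling

lemma inv_sq_div_max_le_sq_add_sq {h s t : ℝ} (hh : 1 ≤ h) (hst : h < s ⊔ t) :
    ((h / (s ⊔ t)) ^ 2)⁻¹ ≤ s ^ 2 + t ^ 2 := by
  have hm : 0 < s ⊔ t := by linarith
  have hmax_sq : (s ⊔ t) ^ 2 ≤ s ^ 2 + t ^ 2 := by
    rcases le_total s t with hle | hle
    · rw [max_eq_right hle]; nlinarith
    · rw [max_eq_left hle]; nlinarith
  calc ((h / (s ⊔ t)) ^ 2)⁻¹ = (s ⊔ t) ^ 2 / h ^ 2 := by rw [← inv_pow, inv_div, div_pow]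
    _ ≤ (s ⊔ t) ^ 2 := div_le_self (sq_nonneg _) (one_le_pow₀ hh)
    _ ≤ s ^ 2 + t ^ 2 := hmax_sq

theorem truncated_khasminskii_general
    {d n : ℕ}
    (D : EuclideanSpace ℝ (Fin d) → EuclideanSpace ℝ (Fin d))
    (f fh : EuclideanSpace ℝ (Fin d) → EuclideanSpace ℝ (Fin d) → EuclideanSpace ℝ (Fin d))
    (g gh : EuclideanSpace ℝ (Fin d) → EuclideanSpace ℝ (Fin d) → EuclideanSpace ℝ (Fin d × Fin n))
    (K p : ℝ) (hK : 0 < K)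
    (hKhas : ∀ x y : EuclideanSpace ℝ (Fin d), ∀ a : ℝ, a ∈ Set.Ioc (0:ℝ) 1 →
      2 * inner ℝ (x - a • D (a⁻¹ • y)) (f x y) + (p - 1) * ‖g x y‖ ^ 2
        ≤ K * (1 + ‖x‖ ^ 2 + ‖y‖ ^ 2))
    (h : ℝ) (hh : 1 ≤ h)
    (hfh : ∀ x y : EuclideanSpace ℝ (Fin d),
      fh x y = if ‖x‖ ⊔ ‖y‖ ≤ h then f x y
        else ((‖x‖ ⊔ ‖y‖) / h) • f ((h / (‖x‖ ⊔ ‖y‖)) • x) ((h / (‖x‖ ⊔ ‖y‖)) • y))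
    (hgh : ∀ x y : EuclideanSpace ℝ (Fin d),
      gh x y = if ‖x‖ ⊔ ‖y‖ ≤ h then g x y
        else ((‖x‖ ⊔ ‖y‖) / h) • g ((h / (‖x‖ ⊔ ‖y‖)) • x) ((h / (‖x‖ ⊔ ‖y‖)) • y)) :
    ∀ x y : EuclideanSpace ℝ (Fin d),
      2 * inner ℝ (x - D y) (fh x y) + (p - 1) * ‖gh x y‖ ^ 2
        ≤ 2 * K * (1 + ‖x‖ ^ 2 + ‖y‖ ^ 2) := by
  intro x y
  rw [hfh, hgh]
  split_ifs with hinside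
  · have hbound := hKhas x y 1 ⟨one_pos, le_rfl⟩
    rw [inv_one, one_smul, one_smul] at hbound
    nlinarith [sq_nonneg ‖x‖, sq_nonneg ‖y‖]
  · have hout : h < ‖x‖ ⊔ ‖y‖ := not_le.mp hinside
    have hm : 0 < ‖x‖ ⊔ ‖y‖ := by linarith
    have ha : h / (‖x‖ ⊔ ‖y‖) ∈ Ioc (0 : ℝ) 1 :=
      ⟨by positivity, (div_le_one hm).mpr hout.le⟩
    rw [← inv_div]
    calc _ ≤ K * (((h / (‖x‖ ⊔ ‖y‖)) ^ 2)⁻¹ + ‖x‖ ^ 2 + ‖y‖ ^ 2) :=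
          khasminskii_rescaled hKhas ha x y
      _ ≤ K * ((‖x‖ ^ 2 + ‖y‖ ^ 2) + ‖x‖ ^ 2 + ‖y‖ ^ 2) := by
          gcongr; exact inv_sq_div_max_le_sq_add_sq hh hout
      _ ≤ 2 * K * (1 + ‖x‖ ^ 2 + ‖y‖ ^ 2) := by nlinarith

theorem truncated_khasminskii
    {d n : ℕ}
    (D : EuclideanSpace ℝ (Fin d) → EuclideanSpace ℝ (Fin d))
    (f fh : EuclideanSpace ℝ (Fin d) → EuclideanSpace ℝ (Fin d) → EuclideanSpace ℝ (Fin d))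
    (g gh : EuclideanSpace ℝ (Fin d) → EuclideanSpace ℝ (Fin d) → EuclideanSpace ℝ (Fin d × Fin n))
    (K p : ℝ) (hK : 0 < K) (hp : 2 < p)
    (hKhas : ∀ x y : EuclideanSpace ℝ (Fin d), ∀ a : ℝ, a ∈ Set.Ioc (0:ℝ) 1 →
      2 * inner ℝ (x - a • D (a⁻¹ • y)) (f x y) + (p - 1) * ‖g x y‖ ^ 2
        ≤ K * (1 + ‖x‖ ^ 2 + ‖y‖ ^ 2))
    (h : ℝ) (hh : 1 ≤ h)
    (hfh : ∀ x y : EuclideanSpace ℝ (Fin d),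
      fh x y = if ‖x‖ ⊔ ‖y‖ ≤ h then f x y
        else ((‖x‖ ⊔ ‖y‖) / h) • f ((h / (‖x‖ ⊔ ‖y‖)) • x) ((h / (‖x‖ ⊔ ‖y‖)) • y))
    (hgh : ∀ x y : EuclideanSpace ℝ (Fin d),
      gh x y = if ‖x‖ ⊔ ‖y‖ ≤ h then g x y
        else ((‖x‖ ⊔ ‖y‖) / h) • g ((h / (‖x‖ ⊔ ‖y‖)) • x) ((h / (‖x‖ ⊔ ‖y‖)) • y)) :
    ∀ x y : EuclideanSpace ℝ (Fin d),
      2 * inner ℝ (x - D y) (fh x y) + (p - 1) * ‖gh x y‖ ^ 2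
        ≤ 2 * K * (1 + ‖x‖ ^ 2 + ‖y‖ ^ 2) :=
  truncated_khasminskii_general D f fh g gh K p hK hKhas h hh hfh hgh
end

section
/- Define f(x,y) = 2x − x⁵ + (1/2) sin y, g(x,y) = x³ y / (2(1 + y²)), D(y) = (1/2) sin y on ℝ. Then for all x, y ∈ ℝ and all a ∈ (0,1], 2(x − a D(y/a)) f(x,y) + 5 g(x,y)² ≤ (11/2)(1 + x² + y²). -/
open Real

theorem example2_khasminskii (x y a : ℝ) (ha : a ∈ Set.Ioc (0:ℝ) 1) :
    2 * (x - a * ((1 / 2) * Real.sin (y / a))) *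
        (2 * x - x ^ 5 + (1 / 2) * Real.sin y) +
      5 * (x ^ 3 * y / (2 * (1 + y ^ 2))) ^ 2
      ≤ (11 / 2) * (1 + x ^ 2 + y ^ 2) := by
  obtain ⟨ha0, ha1⟩ := ha
  have hg : (x ^ 3 * y / (2 * (1 + y ^ 2))) ^ 2 ≤ x ^ 6 / 16 := by
    rw [div_pow, div_le_div_iff₀ (by positivity) (by norm_num)]
    nlinarith [sq_nonneg (x ^ 3 * (1 - y ^ 2))]
  set s := Real.sin (y / a) with hs
  set t := Real.sin y with ht
  have hs1 : -1 ≤ s := Real.neg_one_le_sin _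
  have hs2 : s ≤ 1 := Real.sin_le_one _
  have ht1 : -1 ≤ t := Real.neg_one_le_sin _
  have ht2 : t ≤ 1 := Real.sin_le_one _
  have hu1 : a * s ≤ 1 := by nlinarith
  have hu2 : -1 ≤ a * s := by nlinarith
  have key : a * s * x ^ 5 ≤ (5 / 6) * x ^ 6 + 1 / 6 := by
    nlinarith [sq_nonneg (a * s * x ^ 2 - x ^ 3),
      mul_nonneg (sq_nonneg (x ^ 2 - 1)) (by positivity : (0:ℝ) ≤ 2 * x ^ 2 + 1),
      mul_nonneg (mul_nonneg (by linarith : (0:ℝ) ≤ 1 - a * s)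
        (by linarith : (0:ℝ) ≤ 1 + a * s)) (by positivity : (0:ℝ) ≤ x ^ 4)]
  nlinarith [hg, key, sq_nonneg (x - t), sq_nonneg (x + a * s),
    sq_nonneg x,
    mul_nonneg (by linarith : (0:ℝ) ≤ 1 - a * s) (by linarith : (0:ℝ) ≤ 1 + t),
    mul_nonneg (by linarith : (0:ℝ) ≤ 1 + a * s) (by linarith : (0:ℝ) ≤ 1 - t)]
end
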